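/- arXiv:2202.10054 — 5 statements merged into one kernel-verified Lean document; each statement's English description precedes it below -/
import Mathlib

section
/- Let X ∈ ℝ^{n×d}, Y ∈ ℝ^n, let v : [0,∞) → ℝ^k be any curve, and let B : [0,∞) → ℝ^{k×d} be differentiable with B'(t) = −2 v(t) (X B(t)ᵀ v(t) − Y)ᵀ X for all t ≥ 0. Then for every x ∈ ℝ^d with X x = 0 (equivalently, x orthogonal to the span of the rows of X) and every t ≥ 0, B(t) x = B(0) x. -/
open Matrix

attribute [local instance] Matrix.normedAddCommGroup Matrix.normedSpace

/-!
The velocity `-2 v (X Bᵀ v - Y)ᵀ X` of `B` is a rank-one matrix whose row factor `rᵀ X` lies in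
the row span of `X`, so it annihilates every `x` with `X x = 0`. Hence `t ↦ B(t) x`, the image
of `B` under the continuous linear map `M ↦ M x`, has zero derivative on `[0, ∞)` and is constant
there by the mean value theorem.
-/

theorem ContinuousLinearMap.apply_eq_apply_zero_of_hasDerivAt {E F : Type*}
    [NormedAddCommGroup E] [NormedSpace ℝ E] [NormedAddCommGroup F] [NormedSpace ℝ F]
    (L : E →L[ℝ] F) {f f' : ℝ → E} (hf : ∀ t, 0 ≤ t → HasDerivAt f (f' t) t)
    (hL : ∀ t, 0 ≤ t → L (f' t) = 0) {t : ℝ} (ht : 0 ≤ t) : L (f t) = L (f 0) := by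
  have hLf : ∀ s, 0 ≤ s → HasDerivAt (fun u => L (f u)) 0 s := fun s hs =>
    hL s hs ▸ L.hasFDerivAt.comp_hasDerivAt s (hf s hs)
  exact constant_of_has_deriv_right_zero
    (fun s hs => (hLf s hs.1).continuousAt.continuousWithinAt)
    (fun s hs => (hLf s hs.1).hasDerivWithinAt) t ⟨ht, le_rfl⟩

theorem Matrix.vecMulVec_vecMul_mulVec_eq_zero {R : Type*} [CommRing R] {m n p : Type*}
    [Fintype n] [Fintype p] (u : m → R) (r : n → R) {X : Matrix n p R} {x : p → R}
    (hx : X *ᵥ x = 0) : vecMulVec u (r ᵥ* X) *ᵥ x = 0 := by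
  rw [vecMulVec_mulVec, ← dotProduct_mulVec, hx, dotProduct_zero, MulOpposite.op_zero, zero_smul]

/-- along the fine-tuning gradient-flow dynamics for the feature extractor,
the features `B(t) x` of points `x` perpendicular to the span of the training data
(`X x = 0`) do not change. -/
theorem stmt_2 {n d k : ℕ} (X : Matrix (Fin n) (Fin d) ℝ) (Y : Fin n → ℝ)
    (v : ℝ → Fin k → ℝ) (B : ℝ → Matrix (Fin k) (Fin d) ℝ)
    (hB : ∀ t : ℝ, 0 ≤ t →
      HasDerivAt B
        ((-2 : ℝ) • Matrix.vecMulVec (v t)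
          (Matrix.vecMul (X.mulVec ((B t)ᵀ.mulVec (v t)) - Y) X)) t) :
    ∀ x : Fin d → ℝ, X.mulVec x = 0 → ∀ t : ℝ, 0 ≤ t → (B t).mulVec x = (B 0).mulVec x := by
  intro x hx t ht
  let evalAt : Matrix (Fin k) (Fin d) ℝ →L[ℝ] Fin k → ℝ :=
    ((mulVecBilin ℝ ℝ).flip x).toContinuousLinearMap
  refine evalAt.apply_eq_apply_zero_of_hasDerivAt hB (fun s _ => ?_) ht
  change ((-2 : ℝ) • vecMulVec _ _) *ᵥ x = 0
  rw [smul_mulVec, vecMulVec_vecMul_mulVec_eq_zero _ _ hx, smul_zero]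
end

section
/- Let X ∈ ℝ^{n×d} and Y ∈ ℝ^n, and let (v(t), B(t)) be a fine-tuning gradient-flow trajectory (differentiable curves v : [0,∞) → ℝ^k, B : [0,∞) → ℝ^{k×d} satisfying v'(t) = −2 B(t) Xᵀ (X B(t)ᵀ v(t) − Y) and B'(t) = −2 v(t) (X B(t)ᵀ v(t) − Y)ᵀ X). Then for all t ≥ 0: v(0) v(0)ᵀ − B(0) B(0)ᵀ = v(t) v(t)ᵀ − B(t) B(t)ᵀ. -/
/-!
Differentiating, `(v vᵀ)' = v' vᵀ + v v'ᵀ` and `(B Bᵀ)' = B' Bᵀ + B B'ᵀ`. With the residual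
`r = X Bᵀ v − Y` and `q = Xᵀ r`, the flow gives `v' = −2 B q` and `B' = −2 v qᵀ`, so both
derivatives equal `−2 (B q vᵀ + v (B q)ᵀ)`. Hence `v vᵀ − B Bᵀ` has zero derivative on `[0, ∞)`
and is constant there.
-/

open Matrix

attribute [local instance] Matrix.normedAddCommGroup Matrix.normedSpace

/-- Fine-tuning gradient flow trajectory for the loss `‖X Bᵀ v − Y‖₂²`:
`v'(t) = −2 B(t) Xᵀ (X B(t)ᵀ v(t) − Y)` and `B'(t) = −2 v(t) (X B(t)ᵀ v(t) − Y)ᵀ X`. -/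
def IsFTTrajectory {n d k : ℕ} (X : Matrix (Fin n) (Fin d) ℝ) (Y : Fin n → ℝ)
    (v : ℝ → Fin k → ℝ) (B : ℝ → Matrix (Fin k) (Fin d) ℝ) : Prop :=
  ∀ t : ℝ, 0 ≤ t →
    HasDerivAt v ((-2 : ℝ) • (B t).mulVec (Xᵀ.mulVec (X.mulVec ((B t)ᵀ.mulVec (v t)) - Y))) t ∧
    HasDerivAt B
      ((-2 : ℝ) • Matrix.vecMulVec (v t)
        (Matrix.vecMul (X.mulVec ((B t)ᵀ.mulVec (v t)) - Y) X)) t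

section MatrixCalculus

variable {l m p : Type*} [Fintype m] {t : ℝ}

theorem HasDerivAt.matrix_transpose [Fintype l] {A : ℝ → Matrix l m ℝ} {A' : Matrix l m ℝ}
    (hA : HasDerivAt A A' t) : HasDerivAt (fun s => (A s)ᵀ) A'ᵀ t :=
  hasDerivAt_pi.2 fun j => hasDerivAt_pi.2 fun i => hasDerivAt_pi.1 (hasDerivAt_pi.1 hA i) j

theorem HasDerivAt.matrix_mul [Fintype p] {A : ℝ → Matrix l m ℝ} {B : ℝ → Matrix m p ℝ}
    {A' : Matrix l m ℝ} {B' : Matrix m p ℝ} (hA : HasDerivAt A A' t) (hB : HasDerivAt B B' t) :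
    HasDerivAt (fun s => A s * B s) (A' * B t + A t * B') t := by
  refine hasDerivAt_pi.2 fun i => hasDerivAt_pi.2 fun j => ?_
  have hentry := HasDerivAt.fun_sum fun k (_ : k ∈ Finset.univ) =>
    (hasDerivAt_pi.1 (hasDerivAt_pi.1 hA i) k).mul (hasDerivAt_pi.1 (hasDerivAt_pi.1 hB k) j)
  simpa only [mul_apply, Matrix.add_apply, Pi.mul_apply, Finset.sum_add_distrib] using hentry

theorem HasDerivAt.matrix_vecMulVec {u : ℝ → l → ℝ} {w : ℝ → m → ℝ} {u' : l → ℝ} {w' : m → ℝ}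
    (hu : HasDerivAt u u' t) (hw : HasDerivAt w w' t) :
    HasDerivAt (fun s => vecMulVec (u s) (w s)) (vecMulVec u' (w t) + vecMulVec (u t) w') t :=
  hasDerivAt_pi.2 fun i => hasDerivAt_pi.2 fun j =>
    (hasDerivAt_pi.1 hu i).mul (hasDerivAt_pi.1 hw j)

end MatrixCalculus

theorem vecMulVec_mulVec_add_vecMulVec_mulVec {R : Type*} [CommSemiring R] {m n : Type*}
    [Fintype n] (B : Matrix m n R) (u : m → R) (q : n → R) :
    vecMulVec (B *ᵥ q) u + vecMulVec u (B *ᵥ q) = vecMulVec u q * Bᵀ + B * (vecMulVec u q)ᵀ := by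
  rw [vecMulVec_mul, ← mulVec_transpose, transpose_transpose, transpose_vecMulVec,
    mul_vecMulVec, add_comm]

theorem eq_of_hasDerivAt_zero_of_nonneg {E : Type*} [NormedAddCommGroup E] [NormedSpace ℝ E]
    {f : ℝ → E} (hf : ∀ t, 0 ≤ t → HasDerivAt f 0 t) {t : ℝ} (ht : 0 ≤ t) : f t = f 0 :=
  constant_of_has_deriv_right_zero (fun s hs => (hf s hs.1).continuousAt.continuousWithinAt)
    (fun s hs => (hf s hs.1).hasDerivWithinAt) t (Set.right_mem_Icc.2 ht)

theorem IsFTTrajectory.hasDerivAt_vecMulVec_sub_mul_transpose {n d k : ℕ}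
    {X : Matrix (Fin n) (Fin d) ℝ} {Y : Fin n → ℝ} {v : ℝ → Fin k → ℝ}
    {B : ℝ → Matrix (Fin k) (Fin d) ℝ} (htraj : IsFTTrajectory X Y v B) {t : ℝ} (ht : 0 ≤ t) :
    HasDerivAt (fun s => vecMulVec (v s) (v s) - B s * (B s)ᵀ) 0 t := by
  obtain ⟨hv, hB⟩ := htraj t ht
  rw [mulVec_transpose X] at hv
  have h := (hv.matrix_vecMulVec hv).fun_sub (hB.matrix_mul hB.matrix_transpose)
  simp only [smul_vecMulVec, vecMulVec_smul, Matrix.smul_mul, Matrix.mul_smul, transpose_smul,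
    ← smul_add, vecMulVec_mulVec_add_vecMulVec_mulVec, sub_self] at h
  exact h

/-- balancedness invariant: `v(0) v(0)ᵀ − B(0) B(0)ᵀ = v(t) v(t)ᵀ − B(t) B(t)ᵀ`
along any fine-tuning gradient-flow trajectory. -/
theorem stmt_3 {n d k : ℕ} (X : Matrix (Fin n) (Fin d) ℝ) (Y : Fin n → ℝ)
    (v : ℝ → Fin k → ℝ) (B : ℝ → Matrix (Fin k) (Fin d) ℝ)
    (htraj : IsFTTrajectory X Y v B) :
    ∀ t : ℝ, 0 ≤ t →
      Matrix.vecMulVec (v 0) (v 0) - B 0 * (B 0)ᵀ =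
        Matrix.vecMulVec (v t) (v t) - B t * (B t)ᵀ := fun _ ht =>
  (eq_of_hasDerivAt_zero_of_nonneg (fun _ hs => htraj.hasDerivAt_vecMulVec_sub_mul_transpose hs)
    ht).symm
end

section
/- Let R and S be subspaces of ℝ^d with dim R ≤ dim S, and let c = cangle(R, S). Then for every r ∈ R with ‖r‖₂ = c, there exists s ∈ S with Π_R(s) = r and ‖s‖₂ ≤ 1, where Π_R denotes the orthogonal projection onto R. -/
/-!
Since `⟪Π_R Π_S x, x⟫ = ‖Π_S x‖² ≥ c² ‖x‖²` for `x ∈ R`, the map `Π_R Π_S` is injective on `R`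
when `c > 0`, hence surjective on the finite-dimensional `R`: pick `w ∈ R` with `Π_R Π_S w = r`.
Then `s = Π_S w` works, because `‖s‖² = ⟪Π_R s, w⟫ = ⟪r, w⟫ ≤ c ‖w‖ ≤ ‖s‖`.
-/

open scoped RealInnerProductSpace

noncomputable section

/-- Cosine of the largest principal angle between subspaces `R` and `T` of `ℝ^d`:
`cangle R T = inf {‖Π_T r‖ : r ∈ R, ‖r‖ = 1}` (equal to `0` when `R = {0}`, since `sInf ∅ = 0`). -/
def cangle {d : ℕ} (R T : Submodule ℝ (EuclideanSpace ℝ (Fin d))) : ℝ :=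
  sInf {c | ∃ r ∈ R, ‖r‖ = 1 ∧ c = ‖(Submodule.orthogonalProjectionOnto T r : EuclideanSpace ℝ (Fin d))‖}

namespace Submodule

variable {F : Type*} [NormedAddCommGroup F] [InnerProductSpace ℝ F]
  {K L : Submodule ℝ F} [K.HasOrthogonalProjection] [L.HasOrthogonalProjection]

theorem inner_starProjection_starProjection_of_mem {x : F} (hx : x ∈ K) :
    ⟪K.starProjection (L.starProjection x), x⟫ = ‖L.starProjection x‖ ^ 2 := by
  rw [inner_starProjection_left_eq_right, starProjection_eq_self_iff.mpr hx]
  exact L.re_inner_starProjection_eq_normSq x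

theorem exists_starProjection_starProjection_eq [FiniteDimensional ℝ K] (hKL : Disjoint K Lᗮ)
    {r : F} (hr : r ∈ K) : ∃ w ∈ K, K.starProjection (L.starProjection w) = r := by
  let f : K →ₗ[ℝ] K :=
    (K.orthogonalProjectionOnto ∘L L.starProjection ∘L K.subtypeL : K →L[ℝ] K)
  have hf : Function.Injective f := by
    refine (injective_iff_map_eq_zero f).mpr fun x hx => ?_
    have hx' : K.starProjection (L.starProjection x) = 0 := congrArg Subtype.val hx
    have hLx : L.starProjection x = 0 := by
      simpa [hx'] using (inner_starProjection_starProjection_of_mem (L := L) x.2).symm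
    have hxL : (x : F) ∈ K ⊓ Lᗮ := ⟨x.2, (starProjection_apply_eq_zero_iff L).mp hLx⟩
    rw [hKL.eq_bot, mem_bot] at hxL
    exact Subtype.ext hxL
  obtain ⟨w, hw⟩ := LinearMap.injective_iff_surjective.mp hf ⟨r, hr⟩
  exact ⟨w, w.2, congrArg Subtype.val hw⟩

theorem exists_mem_starProjection_eq_of_mul_norm_le [FiniteDimensional ℝ K] {c : ℝ} (hc : 0 < c)
    (hKL : ∀ x ∈ K, c * ‖x‖ ≤ ‖L.starProjection x‖) {r : F} (hr : r ∈ K) :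
    ∃ s ∈ L, K.starProjection s = r ∧ c * ‖s‖ ≤ ‖r‖ := by
  have hdisj : Disjoint K Lᗮ := by
    refine disjoint_def.mpr fun x hxK hxL => norm_le_zero_iff.mp ?_
    have := hKL x hxK
    rw [(starProjection_apply_eq_zero_iff L).mpr hxL, norm_zero] at this
    exact nonpos_of_mul_nonpos_right this hc
  obtain ⟨w, hwK, hw⟩ := exists_starProjection_starProjection_eq hdisj hr
  set s := L.starProjection w
  refine ⟨s, L.starProjection_apply_mem w, hw, ?_⟩
  have hs_sq : ‖s‖ ^ 2 ≤ ‖r‖ * ‖w‖ :=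
    calc ‖s‖ ^ 2 = ⟪K.starProjection s, w⟫ := (inner_starProjection_starProjection_of_mem hwK).symm
      _ = ⟪r, w⟫ := by rw [hw]
      _ ≤ ‖r‖ * ‖w‖ := real_inner_le_norm r w
  rcases (norm_nonneg s).eq_or_lt with hs0 | hs_pos
  · rw [← hs0, mul_zero]
    exact norm_nonneg r
  refine le_of_mul_le_mul_right ?_ hs_pos
  calc c * ‖s‖ * ‖s‖ = c * ‖s‖ ^ 2 := by ring
    _ ≤ c * (‖r‖ * ‖w‖) := by gcongr
    _ = ‖r‖ * (c * ‖w‖) := by ring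
    _ ≤ ‖r‖ * ‖s‖ := by gcongr; exact hKL w hwK

end Submodule

theorem cangle_mul_norm_le {d : ℕ} (R T : Submodule ℝ (EuclideanSpace ℝ (Fin d)))
    {x : EuclideanSpace ℝ (Fin d)} (hx : x ∈ R) :
    cangle R T * ‖x‖ ≤ ‖T.starProjection x‖ := by
  rcases eq_or_ne x 0 with rfl | hx0
  · simp
  have hxpos : 0 < ‖x‖ := norm_pos_iff.mpr hx0
  have hbdd : BddBelow {c | ∃ r ∈ R, ‖r‖ = 1 ∧
      c = ‖(T.orthogonalProjectionOnto r : EuclideanSpace ℝ (Fin d))‖} :=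
    ⟨0, by rintro c ⟨r, -, -, rfl⟩; exact norm_nonneg _⟩
  have hle : cangle R T ≤ ‖T.starProjection (‖x‖⁻¹ • x)‖ :=
    csInf_le hbdd ⟨‖x‖⁻¹ • x, R.smul_mem _ hx, by simp [norm_smul, hxpos.ne'], rfl⟩
  rw [map_smul, norm_smul, norm_inv, norm_norm, le_inv_mul_iff₀ hxpos] at hle
  linarith

theorem stmt_5_general {d : ℕ} (R S : Submodule ℝ (EuclideanSpace ℝ (Fin d))) :
    ∀ r ∈ R, ‖r‖ = cangle R S →
      ∃ s ∈ S, (Submodule.orthogonalProjectionOnto R s : EuclideanSpace ℝ (Fin d)) = r ∧ ‖s‖ ≤ 1 := by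
  intro r hr hrc
  rcases eq_or_ne r 0 with rfl | hr0
  · exact ⟨0, S.zero_mem, by simp, by simp⟩
  have hc : 0 < cangle R S := hrc ▸ norm_pos_iff.mpr hr0
  obtain ⟨s, hsS, hsr, hs⟩ := Submodule.exists_mem_starProjection_eq_of_mul_norm_le hc
    (fun x hx => cangle_mul_norm_le R S hx) hr
  refine ⟨s, hsS, hsr, ?_⟩
  rw [← hrc] at hs
  exact (mul_le_iff_le_one_right (hrc ▸ hc)).mp hs

/-- if `c = cangle(R, S)` with `dim R ≤ dim S`, then every `r ∈ R` of norm `c`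
is the orthogonal projection onto `R` of some `s ∈ S` with `‖s‖ ≤ 1`. -/
theorem stmt_5 {d : ℕ} (R S : Submodule ℝ (EuclideanSpace ℝ (Fin d)))
    (hdim : Module.finrank ℝ R ≤ Module.finrank ℝ S) :
    ∀ r ∈ R, ‖r‖ = cangle R S →
      ∃ s ∈ S, (Submodule.orthogonalProjectionOnto R s : EuclideanSpace ℝ (Fin d)) = r ∧ ‖s‖ ≤ 1 :=
  stmt_5_general R S
end
end

section
/- There exists a universal constant c > 0 such that for every a > 0, every ν ≥ 0, and every δ ∈ [0, 1], if u is a real random variable with the Gaussian distribution N(0, ν²) (interpreted as the Dirac mass at 0 when ν = 0), then P(|u − a| ≤ c δ a) ≤ δ. -/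
/-!
With `c = 1/2`, every point `u` of the event satisfies `|u| ≥ a / 2`. Writing `t = |x| / σ`, the
density of `N(0, σ²)` at `x ≠ 0` equals `t e^{-t²/2} / (√(2π) |x|) ≤ 1 / (√(2π) |x|)`, uniformly in
`σ`; so on the event it is at most `2 / (√(2π) a) ≤ 1 / a`, and the event has length `δ a`.
-/

open ProbabilityTheory MeasureTheory Real
open scoped NNReal ENNReal

lemma mul_exp_neg_sq_div_two_le_one (t : ℝ) : t * rexp (-t ^ 2 / 2) ≤ 1 := by
  calc t * rexp (-t ^ 2 / 2) = t / rexp (t ^ 2 / 2) := by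
        rw [neg_div, exp_neg, ← div_eq_mul_inv]
    _ ≤ 1 := (div_le_one (exp_pos _)).2 (by nlinarith [add_one_le_exp (t ^ 2 / 2)])

lemma gaussianPDFReal_le_inv_sqrt_two_pi_mul_abs_sub (μ : ℝ) (v : ℝ≥0) {x : ℝ} (hx : x ≠ μ) :
    gaussianPDFReal μ v x ≤ (√(2 * π) * |x - μ|)⁻¹ := by
  have hd : 0 < |x - μ| := abs_pos.2 (sub_ne_zero.2 hx)
  rcases eq_or_ne v 0 with rfl | hv
  · simp only [gaussianPDFReal_zero_var, Pi.zero_apply]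
    positivity
  set σ := √(v : ℝ)
  have hσ : 0 < σ := sqrt_pos.2 (by positivity)
  have hexp : rexp (-(x - μ) ^ 2 / (2 * v)) ≤ σ / |x - μ| := by
    have h := mul_exp_neg_sq_div_two_le_one (|x - μ| / σ)
    rw [div_pow, sq_abs, sq_sqrt v.coe_nonneg, div_mul_eq_mul_div, div_le_one hσ] at h
    rw [le_div_iff₀ hd, mul_comm]
    convert h using 3
    ring
  calc gaussianPDFReal μ v x = (√(2 * π) * σ)⁻¹ * rexp (-(x - μ) ^ 2 / (2 * v)) := by
        rw [gaussianPDFReal, sqrt_mul (by positivity)]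
    _ ≤ (√(2 * π) * σ)⁻¹ * (σ / |x - μ|) := by gcongr
    _ = (√(2 * π) * |x - μ|)⁻¹ := by field_simp

lemma gaussianReal_le_ofReal_mul_volume_of_le_abs_sub {μ : ℝ} {v : ℝ≥0} {r : ℝ} (hr : 0 < r)
    {s : Set ℝ} (hs : ∀ x ∈ s, r ≤ |x - μ|) :
    gaussianReal μ v s ≤ ENNReal.ofReal (√(2 * π) * r)⁻¹ * volume s := by
  have hμ : μ ∉ s := fun h ↦ by simpa [hr.not_ge] using hs μ h
  rcases eq_or_ne v 0 with rfl | hv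
  · simp [gaussianReal_zero_var, Measure.dirac_apply, hμ]
  rw [gaussianReal_apply μ hv, ← setLIntegral_const]
  refine setLIntegral_mono measurable_const fun x hx ↦ ENNReal.ofReal_le_ofReal ?_
  calc gaussianPDFReal μ v x ≤ (√(2 * π) * |x - μ|)⁻¹ :=
        gaussianPDFReal_le_inv_sqrt_two_pi_mul_abs_sub μ v (ne_of_mem_of_not_mem hx hμ)
    _ ≤ (√(2 * π) * r)⁻¹ := by gcongr; exact hs x hx

/-- Gaussian anti-concentration: there is a universal constant `c > 0` such
that for all `a > 0`, all variances `ν² ≥ 0` and all `δ ∈ [0,1]`, a `N(0, ν²)` random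
variable `u` satisfies `P(|u − a| ≤ c δ a) ≤ δ`. (For `ν = 0`, `gaussianReal 0 0` is the
Dirac mass at `0`.) -/
theorem stmt_10 : ∃ c : ℝ, 0 < c ∧
    ∀ (a : ℝ), 0 < a → ∀ (ν : NNReal) (δ : ℝ), 0 ≤ δ → δ ≤ 1 →
      gaussianReal 0 (ν ^ 2) {u : ℝ | |u - a| ≤ c * δ * a} ≤ ENNReal.ofReal δ := by
  refine ⟨1 / 2, by norm_num, fun a ha ν δ hδ0 hδ1 ↦ ?_⟩
  set E := {u : ℝ | |u - a| ≤ 1 / 2 * δ * a}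
  have hfar : ∀ u ∈ E, a / 2 ≤ |u - 0| := fun u hu ↦ by
    rw [Set.mem_ofPred_eq, abs_le] at hu
    have hδa : δ * a ≤ a := mul_le_of_le_one_left ha.le hδ1
    rw [sub_zero, le_abs]
    left; linarith
  have hvol : volume E = ENNReal.ofReal (δ * a) := by
    rw [show E = Metric.closedBall a (1 / 2 * δ * a) from rfl, Real.volume_closedBall]
    ring_nf
  have hpi : 2 ≤ √(2 * π) := le_sqrt_of_sq_le (by nlinarith [pi_gt_three])
  calc _ ≤ ENNReal.ofReal (√(2 * π) * (a / 2))⁻¹ * volume E :=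
        gaussianReal_le_ofReal_mul_volume_of_le_abs_sub (by positivity) hfar
    _ = ENNReal.ofReal ((√(2 * π) * (a / 2))⁻¹ * (δ * a)) := by
        rw [hvol, ← ENNReal.ofReal_mul (by positivity)]
    _ ≤ ENNReal.ofReal δ := by
        refine ENNReal.ofReal_le_ofReal ?_
        rw [inv_mul_le_iff₀ (by positivity)]
        nlinarith [mul_le_mul_of_nonneg_right hpi (mul_nonneg hδ0 ha.le)]
end

section
/- There exists a universal constant c > 0 such that for every k ≥ 1, every v* ∈ ℝ^k with v* ≠ 0, every σ > 0, and every δ ∈ [0, 1], if v₀ ∈ ℝ^k is a random vector whose coordinates are independent and each distributed N(0, σ²), then with probability at least 1 − δ: |(⟨v₀, v*⟩)² − (⟨v*, v*⟩)²| ≥ c δ (⟨v*, v*⟩)². -/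
/-!
The projection `⟨v₀, v*⟩` is a centred Gaussian of variance `‖v*‖²σ²` (compare characteristic
functions). With `a = ⟨v*, v*⟩`, the event `|⟨v₀, v*⟩² - a²| < u a²` forces `⟨v₀, v*⟩` into the
two intervals of radius `u a` around `±a`, of total length `4 u a`, on which the Gaussian density
is at most its value at `a / 2`. Since `x ↦ x e^{-x²/8V}` is at most `√(2V)`, the product
`a · pdf(a / 2)` is at most `1/√π` whatever the variance, so the event has probability at most
`4 u`; take `u = δ / 4`.
-/

open ProbabilityTheory MeasureTheory Matrix Real Metric
open scoped NNReal ENNReal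

theorem map_dotProduct_pi_gaussianReal {ι : Type*} [Fintype ι] (v : ℝ≥0) (w : ι → ℝ) :
    (Measure.pi fun _ : ι => gaussianReal 0 v).map (· ⬝ᵥ w) =
      gaussianReal 0 ((w ⬝ᵥ w).toNNReal * v) := by
  apply Measure.ext_of_charFun
  ext t
  rw [charFun_apply_real, integral_map (by fun_prop) (by fun_prop), charFun_gaussianReal]
  simp_rw [dotProduct, Complex.ofReal_sum, Finset.mul_sum, Finset.sum_mul, Complex.exp_sum]
  rw [integral_fintype_prod_eq_prod (f := fun i x => Complex.exp (t * (x * w i : ℝ) * Complex.I))]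
  have hcoord (i : ι) : ∫ x, Complex.exp (t * (x * w i : ℝ) * Complex.I) ∂gaussianReal 0 v =
      charFun (gaussianReal 0 v) (t * w i) := by
    rw [charFun_apply_real]
    congr 1 with x
    push_cast
    ring_nf
  have hw : 0 ≤ ∑ i, w i * w i := Finset.sum_nonneg fun i _ => mul_self_nonneg (w i)
  simp_rw [hcoord, charFun_gaussianReal, ← Complex.exp_sum]
  congr 1
  simp only [Complex.ofReal_zero, mul_zero, zero_mul, zero_sub, Finset.sum_neg_distrib,
    NNReal.coe_mul, Real.coe_toNNReal _ hw]
  push_cast [Finset.sum_mul, Finset.sum_div]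
  exact congrArg _ (Finset.sum_congr rfl fun i _ => by ring)

lemma two_mul_le_exp_sq (y : ℝ) : 2 * y ≤ exp (y ^ 2) := by
  nlinarith [add_one_le_exp (y ^ 2), sq_nonneg (y - 1)]

lemma mul_gaussianPDFReal_half_le_one (a : ℝ) (v : ℝ≥0) :
    a * gaussianPDFReal 0 v (a / 2) ≤ 1 := by
  rcases eq_or_ne v 0 with rfl | hv
  · simp [gaussianPDFReal]
  have hv : (0 : ℝ) < v := by positivity
  set s := √(2 * v) with hs_def
  have hs : 0 < s := by positivity
  have hexp : a * exp (-(a / 2 - 0) ^ 2 / (2 * v)) ≤ s := by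
    have hexponent : -(a / 2 - 0) ^ 2 / (2 * v) = -(a / (2 * s)) ^ 2 := by
      field_simp
      rw [hs_def, sq_sqrt (by positivity)]
      ring
    rw [hexponent, exp_neg, ← div_eq_mul_inv, div_le_iff₀ (exp_pos _)]
    calc a = s * (2 * (a / (2 * s))) := by field_simp
      _ ≤ s * exp ((a / (2 * s)) ^ 2) := by gcongr; exact two_mul_le_exp_sq _
  have hnorm : √(2 * π * v) = √π * s := by
    rw [hs_def, ← sqrt_mul pi_pos.le]
    ring_nf
  calc a * gaussianPDFReal 0 v (a / 2) = a * exp (-(a / 2 - 0) ^ 2 / (2 * v)) / (√π * s) := by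
        rw [gaussianPDFReal, hnorm]; ring
    _ ≤ s / (√π * s) := by gcongr
    _ = 1 / √π := by field_simp
    _ ≤ 1 := by
        rw [div_le_one (by positivity), one_le_sqrt]
        linarith [pi_gt_three]

lemma gaussianPDFReal_zero_le_of_abs_le {v : ℝ≥0} {r y : ℝ} (h : |r| ≤ |y|) :
    gaussianPDFReal 0 v y ≤ gaussianPDFReal 0 v r := by
  simp only [gaussianPDFReal, sub_zero]
  gcongr _ * Real.exp (-?_ / _)
  exact sq_le_sq.mpr h

lemma gaussianReal_le_ofReal_gaussianPDFReal_mul_volume {v : ℝ≥0} (hv : v ≠ 0) {r : ℝ}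
    {s : Set ℝ} (hs : ∀ y ∈ s, |r| ≤ |y|) :
    gaussianReal 0 v s ≤ ENNReal.ofReal (gaussianPDFReal 0 v r) * volume s := by
  rw [gaussianReal_apply 0 hv, ← setLIntegral_const]
  exact setLIntegral_mono measurable_const fun y hy =>
    ENNReal.ofReal_le_ofReal (gaussianPDFReal_zero_le_of_abs_le (hs y hy))

lemma setOf_abs_sq_sub_sq_lt_subset {a u : ℝ} (ha : 0 < a) :
    {y : ℝ | |y ^ 2 - a ^ 2| < u * a ^ 2} ⊆ ball a (u * a) ∪ ball (-a) (u * a) := by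
  intro y hy
  rw [Set.mem_ofPred_eq, sq_sub_sq, abs_mul] at hy
  rcases le_or_gt 0 y with hy0 | hy0
  · left
    rw [mem_ball, Real.dist_eq]
    have : a ≤ |y + a| := by rw [abs_of_pos (by linarith)]; linarith
    nlinarith [abs_nonneg (y - a)]
  · right
    rw [mem_ball, Real.dist_eq, sub_neg_eq_add]
    have : a ≤ |y - a| := by rw [abs_of_neg (by linarith)]; linarith
    nlinarith [abs_nonneg (y + a)]

theorem gaussianReal_setOf_abs_sq_sub_sq_lt_le {v : ℝ≥0} (hv : v ≠ 0) {a u : ℝ} (ha : 0 < a)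
    (hu₀ : 0 ≤ u) (hu : u ≤ 1 / 2) :
    gaussianReal 0 v {y | |y ^ 2 - a ^ 2| < u * a ^ 2} ≤ ENNReal.ofReal (4 * u) := by
  have hfar : ∀ y ∈ ball a (u * a) ∪ ball (-a) (u * a), |a / 2| ≤ |y| := by
    rintro y (hy | hy) <;> rw [mem_ball, Real.dist_eq, abs_lt] at hy
    · rw [abs_of_pos (by linarith), abs_of_pos (by nlinarith)]; nlinarith
    · rw [abs_of_pos (by linarith), abs_of_neg (by nlinarith)]; nlinarith
  calc gaussianReal 0 v {y | |y ^ 2 - a ^ 2| < u * a ^ 2}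
      ≤ gaussianReal 0 v (ball a (u * a) ∪ ball (-a) (u * a)) :=
        measure_mono (setOf_abs_sq_sub_sq_lt_subset ha)
    _ ≤ ENNReal.ofReal (gaussianPDFReal 0 v (a / 2)) *
          volume (ball a (u * a) ∪ ball (-a) (u * a)) :=
        gaussianReal_le_ofReal_gaussianPDFReal_mul_volume hv hfar
    _ ≤ ENNReal.ofReal (gaussianPDFReal 0 v (a / 2)) * ENNReal.ofReal (4 * (u * a)) := by
        gcongr
        refine (measure_union_le _ _).trans_eq ?_
        rw [Real.volume_ball, Real.volume_ball,
          ← ENNReal.ofReal_add (by positivity) (by positivity)]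
        ring_nf
    _ = ENNReal.ofReal (4 * u * (a * gaussianPDFReal 0 v (a / 2))) := by
        rw [← ENNReal.ofReal_mul (gaussianPDFReal_nonneg _ _ _)]; ring_nf
    _ ≤ ENNReal.ofReal (4 * u) :=
        ENNReal.ofReal_le_ofReal
          (mul_le_of_le_one_right (by positivity) (mul_gaussianPDFReal_half_le_one a v))

/-- with probability at least `1 − δ` over a Gaussian head initialization
`v₀ ∼ N(0, σ² I_k)`, the squared head error satisfies
`|⟨v₀, v*⟩² − ⟨v*, v*⟩²| ≥ c δ ⟨v*, v*⟩²` for a universal constant `c > 0`. -/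
theorem stmt_11 : ∃ c : ℝ, 0 < c ∧
    ∀ (k : ℕ), 1 ≤ k → ∀ (vstar : Fin k → ℝ), vstar ≠ 0 →
    ∀ (σ : NNReal), 0 < σ → ∀ (δ : ℝ), 0 ≤ δ → δ ≤ 1 →
      1 - ENNReal.ofReal δ ≤
        Measure.pi (fun _ : Fin k => gaussianReal 0 (σ ^ 2))
          {v0 : Fin k → ℝ |
            c * δ * (vstar ⬝ᵥ vstar) ^ 2 ≤ |(v0 ⬝ᵥ vstar) ^ 2 - (vstar ⬝ᵥ vstar) ^ 2|} := by
  refine ⟨1 / 4, by norm_num, fun k _ vstar hv σ hσ δ hδ₀ hδ₁ => ?_⟩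
  set a := vstar ⬝ᵥ vstar
  have ha : 0 < a := by simpa using dotProduct_self_star_pos_iff.mpr hv
  have hV : a.toNNReal * σ ^ 2 ≠ 0 := by positivity
  have hT : MeasurableSet {y : ℝ | 1 / 4 * δ * a ^ 2 ≤ |y ^ 2 - a ^ 2|} :=
    measurableSet_le measurable_const (by fun_prop)
  have hTc : {y : ℝ | 1 / 4 * δ * a ^ 2 ≤ |y ^ 2 - a ^ 2|}ᶜ =
      {y | |y ^ 2 - a ^ 2| < δ / 4 * a ^ 2} := by
    ext y; simp [not_le, div_eq_inv_mul]
  calc 1 - ENNReal.ofReal δ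
      ≤ 1 - gaussianReal 0 (a.toNNReal * σ ^ 2) {y | |y ^ 2 - a ^ 2| < δ / 4 * a ^ 2} := by
        gcongr
        have h := gaussianReal_setOf_abs_sq_sub_sq_lt_le (u := δ / 4) hV ha (by positivity)
          (by linarith)
        rwa [mul_div_cancel₀ _ four_ne_zero] at h
    _ = gaussianReal 0 (a.toNNReal * σ ^ 2) {y | 1 / 4 * δ * a ^ 2 ≤ |y ^ 2 - a ^ 2|} := by
        rw [← hTc, prob_compl_eq_one_sub hT,
          ENNReal.sub_sub_cancel ENNReal.one_ne_top prob_le_one]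
    _ = _ := by
        rw [← map_dotProduct_pi_gaussianReal, Measure.map_apply (by fun_prop) hT]
        rfl
end
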